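/- arXiv:2310.01017 — 4 statements merged into one kernel-verified Lean document; each statement's English description precedes it below -/
import Mathlib

section
/- Let β : ℂ → ℂ be continuous and strictly monotone with constant α > 0, i.e. Re⟨β(z) − β(z'), z − z'⟩ ≥ α·|z − z'|² for all z, z' ∈ ℂ. Then β is bijective and its inverse γ := β⁻¹ : ℂ → ℂ satisfies: (i) Re⟨x − y, γ(x) − γ(y)⟩ ≥ α·|γ(x) − γ(y)|² for all x, y ∈ ℂ (so γ is monotone), and (ii) |γ(x) − γ(y)| ≤ (1/α)·|x − y| for all x, y ∈ ℂ (so γ is (1/α)-Lipschitz). -/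
/-!
Injectivity and the estimates for the inverse follow from Cauchy–Schwarz:
`α ‖z - z'‖² ≤ ⟪β z - β z', z - z'⟫ ≤ ‖β z - β z'‖ ‖z - z'‖`.

Surjectivity is reduced to the intermediate value theorem. On each vertical line
`Re z = x`, the function `y ↦ Im β (x + y i)` is continuous and strongly increasing, so it
takes the value `Im w` at a unique point `φ x`, and `φ` is continuous. Along the curve
`x + φ x i`, the function `x ↦ Re β (x + φ x i)` is again continuous and strongly increasing,
hence takes the value `Re w`.
-/

open Filter Function

section InnerProductSpace

variable {E : Type*} [NormedAddCommGroup E] [InnerProductSpace ℝ E]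

def IsStronglyMonotone (α : ℝ) (f : E → E) : Prop :=
  ∀ x y, α * ‖x - y‖ ^ 2 ≤ inner ℝ (f x - f y) (x - y)

namespace IsStronglyMonotone

variable {α : ℝ} {f : E → E}

theorem mul_norm_sub_le (hf : IsStronglyMonotone α f) (x y : E) :
    α * ‖x - y‖ ≤ ‖f x - f y‖ := by
  rcases (norm_nonneg (x - y)).eq_or_lt with hxy | hxy
  · simp [← hxy]
  · have := (hf x y).trans (real_inner_le_norm _ _)
    nlinarith

theorem injective (hf : IsStronglyMonotone α f) (hα : 0 < α) : Injective f := by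
  intro x y hxy
  have := hf.mul_norm_sub_le x y
  rw [hxy, sub_self, norm_zero] at this
  exact sub_eq_zero.1 (norm_le_zero_iff.1 (nonpos_of_mul_nonpos_right this hα))

theorem norm_sub_le_of_rightInverse (hf : IsStronglyMonotone α f) (hα : 0 < α) {g : E → E}
    (hg : RightInverse g f) (x y : E) : ‖g x - g y‖ ≤ 1 / α * ‖x - y‖ := by
  have := hf.mul_norm_sub_le (g x) (g y)
  rw [hg x, hg y] at this
  rw [div_mul_eq_mul_div, one_mul, le_div_iff₀ hα]
  linarith

end IsStronglyMonotone

end InnerProductSpace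

section Real

variable {α : ℝ} {f : ℝ → ℝ}

theorem monotone_sub_mul_of_mul_sq_le (hf : ∀ y y', α * (y - y') ^ 2 ≤ (f y - f y') * (y - y')) :
    Monotone fun y => f y - α * y := by
  intro y' y hle
  rcases hle.eq_or_lt with rfl | hlt
  · rfl
  · have := hf y y'
    nlinarith

theorem strictMono_of_monotone_sub_mul (hα : 0 < α) (hf : Monotone fun y => f y - α * y) :
    StrictMono f := by
  simpa using hf.add_strictMono (strictMono_id.const_mul hα)

theorem surjective_of_monotone_sub_mul (hc : Continuous f) (hα : 0 < α)
    (hf : Monotone fun y => f y - α * y) : Surjective f := by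
  have hf_eq : f = fun y => (f y - α * y) + α * y := by simp
  refine hc.surjective ?_ ?_ <;> rw [hf_eq]
  · exact tendsto_atTop_add_left_of_le' _ (f 0 - α * 0)
      (eventually_ge_atTop 0 |>.mono fun y hy => hf hy) (tendsto_id.const_mul_atTop hα)
  · exact tendsto_atBot_add_left_of_ge' _ (f 0 - α * 0)
      (eventually_le_atBot 0 |>.mono fun y hy => hf hy) (tendsto_id.const_mul_atBot hα)

end Real

theorem continuous_of_strictMono_of_apply_eq {X : Type*} [TopologicalSpace X] {g : X → ℝ → ℝ}
    (hg : Continuous (uncurry g)) (hmono : ∀ x, StrictMono (g x)) {φ : X → ℝ} {c : ℝ}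
    (hφ : ∀ x, g x (φ x) = c) : Continuous φ := by
  refine continuous_iff_continuousAt.2 fun x₀ => tendsto_order.2 ⟨fun a ha => ?_, fun b hb => ?_⟩
  · have hlt : g x₀ a < c := hφ x₀ ▸ hmono x₀ ha
    filter_upwards [(hg.comp (continuous_id.prodMk continuous_const)).continuousAt.eventually_lt
      continuousAt_const hlt] with x hx
    exact (hmono x).lt_iff_lt.1 (hφ x ▸ hx)
  · have hlt : c < g x₀ b := hφ x₀ ▸ hmono x₀ hb
    filter_upwards [continuousAt_const.eventually_lt
      (hg.comp (continuous_id.prodMk continuous_const)).continuousAt hlt] with x hx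
    exact (hmono x).lt_iff_lt.1 (hφ x ▸ hx)

namespace IsStronglyMonotone

variable {α : ℝ} {β : ℂ → ℂ}

theorem re_im (hβ : IsStronglyMonotone α β) (z z' : ℂ) :
    α * ((z.re - z'.re) ^ 2 + (z.im - z'.im) ^ 2) ≤
      ((β z).re - (β z').re) * (z.re - z'.re) + ((β z).im - (β z').im) * (z.im - z'.im) := by
  have := hβ z z'
  simp only [Complex.inner, Complex.sq_norm, Complex.normSq_apply, Complex.mul_re,
    Complex.sub_re, Complex.sub_im, Complex.conj_re, Complex.conj_im] at this
  nlinarith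

theorem surjective_of_continuous (hβ : IsStronglyMonotone α β) (hc : Continuous β)
    (hα : 0 < α) : Surjective β := by
  intro w
  let g : ℝ → ℝ → ℝ := fun x y => (β ⟨x, y⟩).im
  have hg : Continuous (uncurry g) :=
    Complex.continuous_im.comp (hc.comp Complex.equivRealProdCLM.symm.continuous)
  have hg_mono : ∀ x, Monotone fun y => g x y - α * y := fun x =>
    monotone_sub_mul_of_mul_sq_le fun y y' => by simpa using hβ.re_im ⟨x, y⟩ ⟨x, y'⟩
  have hφ_ex : ∀ x, ∃ y, g x y = w.im := fun x =>
    surjective_of_monotone_sub_mul (hg.comp (Continuous.prodMk_right x)) hα (hg_mono x) w.im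
  choose φ hφ using hφ_ex
  have hφc : Continuous φ := continuous_of_strictMono_of_apply_eq hg
    (fun x => strictMono_of_monotone_sub_mul hα (hg_mono x)) hφ
  have hre_mono : Monotone fun x => (β ⟨x, φ x⟩).re - α * x :=
    monotone_sub_mul_of_mul_sq_le fun x x' => by
      have := hβ.re_im ⟨x, φ x⟩ ⟨x', φ x'⟩
      rw [show (β ⟨x, φ x⟩).im = w.im from hφ x, show (β ⟨x', φ x'⟩).im = w.im from hφ x'] at this
      nlinarith [sq_nonneg (φ x - φ x')]
  obtain ⟨x, hx⟩ := surjective_of_monotone_sub_mul (Complex.continuous_re.comp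
    (hc.comp (Complex.equivRealProdCLM.symm.continuous.comp (continuous_id.prodMk hφc))))
    hα hre_mono w.re
  exact ⟨⟨x, φ x⟩, Complex.ext hx (hφ x)⟩

end IsStronglyMonotone

/-- If `β : ℂ → ℂ` is continuous and strictly monotone with constant
`α > 0`, then `β` is bijective and its inverse `γ` satisfies
(i) `Re⟨x − y, γ x − γ y⟩ ≥ α·|γ x − γ y|²` (monotonicity) and
(ii) `|γ x − γ y| ≤ (1/α)·|x − y|` (Lipschitz with constant `1/α`). -/
theorem stmt3 (β : ℂ → ℂ) (hcont : Continuous β) (α : ℝ) (hα : 0 < α)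
    (hmono : ∀ z z' : ℂ,
      (starRingEnd ℂ (β z - β z') * (z - z')).re ≥ α * ‖z - z'‖ ^ 2) :
    Function.Bijective β ∧
    ∃ γ : ℂ → ℂ, Function.LeftInverse γ β ∧ Function.RightInverse γ β ∧
      (∀ x y : ℂ,
        (starRingEnd ℂ (x - y) * (γ x - γ y)).re ≥ α * ‖γ x - γ y‖ ^ 2) ∧
      (∀ x y : ℂ, ‖γ x - γ y‖ ≤ (1 / α) * ‖x - y‖) := by
  have hβ : IsStronglyMonotone α β := fun z z' => by
    simpa only [Complex.inner, mul_comm] using hmono z z'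
  have hbij : Bijective β := ⟨hβ.injective hα, hβ.surjective_of_continuous hcont hα⟩
  have hγ := rightInverse_surjInv hbij.2
  refine ⟨hbij, surjInv hbij.2, leftInverse_surjInv hbij, hγ, fun x y => ?_,
    hβ.norm_sub_le_of_rightInverse hα hγ⟩
  have := hβ (surjInv hbij.2 x) (surjInv hbij.2 y)
  rw [hγ x, hγ y, Complex.inner] at this
  rwa [ge_iff_le, mul_comm (starRingEnd ℂ _)]
end

section
/- Let β : ℂ → ℂ be continuous and monotone, i.e. Re⟨β(z) − β(z'), z − z'⟩ ≥ 0 for all z, z' ∈ ℂ. If z₁, z₂ ∈ ℂ satisfy Re⟨z₁ − u, z₂ − β(u)⟩ ≥ 0 for every u ∈ ℂ, then z₂ = β(z₁). (Maximality of continuous monotone maps on ℂ.) -/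
/-- Maximality of continuous monotone maps on `ℂ`: if `β : ℂ → ℂ` is
continuous and monotone (`Re⟨β z − β z', z − z'⟩ ≥ 0`, with `⟨z,w⟩ = conj z · w`),
and `z₁, z₂ ∈ ℂ` satisfy `Re⟨z₁ − u, z₂ − β u⟩ ≥ 0` for every `u ∈ ℂ`, then
`z₂ = β z₁`. -/
theorem stmt4 (β : ℂ → ℂ) (hcont : Continuous β)
    (hmono : ∀ z z' : ℂ, (starRingEnd ℂ (β z - β z') * (z - z')).re ≥ 0)
    (z₁ z₂ : ℂ)
    (hmax : ∀ u : ℂ, (starRingEnd ℂ (z₁ - u) * (z₂ - β u)).re ≥ 0) :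
    z₂ = β z₁ := by
  have key : ∀ w : ℂ, 0 ≤ (starRingEnd ℂ w * (z₂ - β z₁)).re := by
    intro w
    set f : ℝ → ℝ := fun t => (starRingEnd ℂ w * (z₂ - β (z₁ - (t : ℂ) * w))).re with hf
    have hpos : ∀ t : ℝ, 0 < t → 0 ≤ f t := by
      intro t ht
      have h := hmax (z₁ - (t : ℂ) * w)
      have heq : z₁ - (z₁ - (t : ℂ) * w) = (t : ℂ) * w := by ring
      rw [heq] at h
      have : (starRingEnd ℂ ((t : ℂ) * w) * (z₂ - β (z₁ - (t : ℂ) * w))).re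
          = t * f t := by
        simp [hf, map_mul, Complex.conj_ofReal, mul_assoc, Complex.re_ofReal_mul]
      rw [this] at h
      exact nonneg_of_mul_nonneg_right h ht
    have hcf : Continuous f := by
      apply Complex.continuous_re.comp
      exact (continuous_const.mul ((continuous_const.sub
        (hcont.comp (continuous_const.sub (Complex.continuous_ofReal.mul continuous_const))))))
    have hlim : Filter.Tendsto f (nhdsWithin 0 (Set.Ioi 0)) (nhds (f 0)) :=
      (hcf.tendsto 0).mono_left nhdsWithin_le_nhds
    have h0 : 0 ≤ f 0 := by
      refine ge_of_tendsto hlim ?_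
      filter_upwards [self_mem_nhdsWithin] with t ht using hpos t ht
    simpa [hf] using h0
  have h := key (-(z₂ - β z₁))
  have : 0 ≤ -Complex.normSq (z₂ - β z₁) := by
    have e : (starRingEnd ℂ (-(z₂ - β z₁)) * (z₂ - β z₁)).re = -Complex.normSq (z₂ - β z₁) := by
      simp [Complex.normSq_apply, Complex.mul_re]; ring
    linarith [e ▸ h]
  have hz : Complex.normSq (z₂ - β z₁) = 0 := le_antisymm (by linarith) (Complex.normSq_nonneg _)
  have := Complex.normSq_eq_zero.mp hz
  exact sub_eq_zero.mp this
end

section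
/- Let β : ℂ → ℂ be continuous and monotone, i.e. Re⟨β(z) − β(z'), z − z'⟩ ≥ 0 for all z, z' ∈ ℂ, and let F_β be its Fitzpatrick function, F_β(z₁, z₂) := sup_{u ∈ ℂ} Re(⟨z₁, β(u)⟩ + ⟨u, z₂⟩ − ⟨u, β(u)⟩). Then for every z₁ ∈ ℂ, β(z₁) is the unique z₂ ∈ ℂ satisfying F_β(z₁, z₂) = Re⟨z₁, z₂⟩; that is, if F_β(z₁, z₂) = Re⟨z₁, z₂⟩ then z₂ = β(z₁). -/
/-- The Fitzpatrick function of `β : ℂ → ℂ`, as an extended-real-valued function on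
`ℂ × ℂ`: `F_β(z₁,z₂) = sup_u Re(⟨z₁, β u⟩ + ⟨u, z₂⟩ − ⟨u, β u⟩)`, with
`⟨z,w⟩ = conj z · w`. -/
noncomputable def fitzpatrick (β : ℂ → ℂ) (p : ℂ × ℂ) : EReal :=
  ⨆ u : ℂ, (((starRingEnd ℂ p.1 * β u + starRingEnd ℂ u * p.2
      - starRingEnd ℂ u * β u).re : ℝ) : EReal)

/-- Let `β : ℂ → ℂ` be continuous and monotone
(`Re⟨β z − β z', z − z'⟩ ≥ 0`). Then for every `z₁`, `β z₁` is the unique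
`z₂ ∈ ℂ` with `F_β(z₁, z₂) = Re⟨z₁, z₂⟩`: if `F_β(z₁, z₂) = Re⟨z₁, z₂⟩` then
`z₂ = β z₁`. -/
theorem stmt10 (β : ℂ → ℂ) (hcont : Continuous β)
    (hmono : ∀ z z' : ℂ, (starRingEnd ℂ (β z - β z') * (z - z')).re ≥ 0)
    (z₁ z₂ : ℂ)
    (heq : fitzpatrick β (z₁, z₂) = (((starRingEnd ℂ z₁ * z₂).re : ℝ) : EReal)) :
    z₂ = β z₁ := by
  -- Each term of the sup is ≤ Re⟨z₁,z₂⟩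
  have hle : ∀ u : ℂ, (starRingEnd ℂ z₁ * β u + starRingEnd ℂ u * z₂
      - starRingEnd ℂ u * β u).re ≤ (starRingEnd ℂ z₁ * z₂).re := by
    intro u
    have h := le_iSup (fun u : ℂ => (((starRingEnd ℂ z₁ * β u + starRingEnd ℂ u * z₂
        - starRingEnd ℂ u * β u).re : ℝ) : EReal)) u
    rw [show (⨆ u : ℂ, (((starRingEnd ℂ z₁ * β u + starRingEnd ℂ u * z₂
        - starRingEnd ℂ u * β u).re : ℝ) : EReal)) = fitzpatrick β (z₁, z₂) from rfl,
      heq] at h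
    exact_mod_cast h
  -- Hence Re⟨z₁ − u, z₂ − β u⟩ ≥ 0 for all u
  have key : ∀ u : ℂ, 0 ≤ (starRingEnd ℂ (z₁ - u) * (z₂ - β u)).re := by
    intro u
    have h := hle u
    have hexp : (starRingEnd ℂ (z₁ - u) * (z₂ - β u)).re
        = (starRingEnd ℂ z₁ * z₂).re - (starRingEnd ℂ z₁ * β u + starRingEnd ℂ u * z₂
          - starRingEnd ℂ u * β u).re := by
      simp [map_sub, sub_mul, mul_sub]
      ring
    rw [hexp]
    linarith
  set w : ℂ := z₂ - β z₁ with hw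
  -- For t > 0, plug u = z₁ + t•w
  have hstep : ∀ t : ℝ, 0 < t → (starRingEnd ℂ w * (z₂ - β (z₁ + (t : ℂ) * w))).re ≤ 0 := by
    intro t ht
    have h := key (z₁ + (t : ℂ) * w)
    have : (starRingEnd ℂ (z₁ - (z₁ + (t : ℂ) * w)) * (z₂ - β (z₁ + (t : ℂ) * w))).re
        = -t * (starRingEnd ℂ w * (z₂ - β (z₁ + (t : ℂ) * w))).re := by
      have : z₁ - (z₁ + (t : ℂ) * w) = -((t : ℂ) * w) := by ring
      rw [this]
      simp [Complex.mul_re]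
      ring
    rw [this] at h
    nlinarith
  -- Take t → 0⁺
  have hlim : (starRingEnd ℂ w * (z₂ - β z₁)).re ≤ 0 := by
    have hc : ContinuousWithinAt
        (fun t : ℝ => (starRingEnd ℂ w * (z₂ - β (z₁ + (t : ℂ) * w))).re)
        (Set.Ioi 0) 0 := by
      apply Continuous.continuousWithinAt
      exact (Complex.continuous_re.comp (continuous_const.mul
        (continuous_const.sub (hcont.comp (continuous_const.add
          (Complex.continuous_ofReal.mul continuous_const))))))
    have := le_of_tendsto hc (by
      filter_upwards [self_mem_nhdsWithin] with t ht
      exact hstep t ht)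
    simpa using this
  rw [hw] at hlim
  have : Complex.normSq (z₂ - β z₁) ≤ 0 := by
    have : (starRingEnd ℂ (z₂ - β z₁) * (z₂ - β z₁)).re = Complex.normSq (z₂ - β z₁) := by
      simp [Complex.mul_re, Complex.normSq_apply]; ring
    linarith [hlim, this.symm.le, this.le]
  have h0 : z₂ - β z₁ = 0 := by
    have := Complex.normSq_nonneg (z₂ - β z₁)
    have : Complex.normSq (z₂ - β z₁) = 0 := le_antisymm ‹_› ‹_›
    exact Complex.normSq_eq_zero.mp this
  exact sub_eq_zero.mp h0
end

section
/- Let β : ℂ → ℂ satisfy β(0) = 0, |β(z) − β(z')| ≤ C|z − z'| for all z, z' ∈ ℂ (Lipschitz with constant C > 0), and Re⟨β(z) − β(z'), z − z'⟩ ≥ c·|z − z'|² for all z, z' ∈ ℂ (strict monotonicity with constant c > 0). Then the Fitzpatrick function F_β(z₁, z₂) := sup_{u ∈ ℂ} Re(⟨z₁, β(u)⟩ + ⟨u, z₂⟩ − ⟨u, β(u)⟩) is finite and real-valued everywhere, and satisfies F_β(z₁, z₂) ≤ C²·|z₁|²/(2c) + |z₂|²/(2c) for all z₁, z₂ ∈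 ℂ. -/
open ComplexConjugate RealInnerProductSpace

lemma mul_sub_half_mul_sq_le {c : ℝ} (hc : 0 < c) (x t : ℝ) :
    x * t - c * t ^ 2 / 2 ≤ x ^ 2 / (2 * c) := by
  rw [le_div_iff₀ (by positivity)]
  nlinarith [sq_nonneg (x - c * t)]

section InnerProductSpace

variable {E : Type*} [NormedAddCommGroup E] [InnerProductSpace ℝ E]

lemma inner_add_inner_sub_inner_le {β : E → E} {C c : ℝ} (hc : 0 < c)
    (hLip : ∀ u, ‖β u‖ ≤ C * ‖u‖) (hmono : ∀ u, c * ‖u‖ ^ 2 ≤ ⟪u, β u⟫)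
    (z₁ z₂ u : E) :
    ⟪z₁, β u⟫ + ⟪u, z₂⟫ - ⟪u, β u⟫ ≤ C ^ 2 * ‖z₁‖ ^ 2 / (2 * c) + ‖z₂‖ ^ 2 / (2 * c) := by
  have h₁ : ⟪z₁, β u⟫ ≤ C * ‖z₁‖ * ‖u‖ :=
    calc ⟪z₁, β u⟫ ≤ ‖z₁‖ * ‖β u‖ := real_inner_le_norm _ _
      _ ≤ ‖z₁‖ * (C * ‖u‖) := by gcongr; exact hLip u
      _ = C * ‖z₁‖ * ‖u‖ := by ring
  have h₂ : ⟪u, z₂⟫ ≤ ‖z₂‖ * ‖u‖ := (real_inner_le_norm _ _).trans_eq (mul_comm _ _)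
  have hC := mul_sub_half_mul_sq_le hc (C * ‖z₁‖) ‖u‖
  have hz := mul_sub_half_mul_sq_le hc ‖z₂‖ ‖u‖
  rw [mul_pow] at hC
  linarith [hmono u]

end InnerProductSpace

lemma re_conj_mul_eq_inner (w z : ℂ) : (conj w * z).re = ⟪w, z⟫ := by
  rw [Complex.inner, mul_comm]

lemma fitzpatrick_eq_coe_iSup {β : ℂ → ℂ} {z₁ z₂ : ℂ}
    (hbdd : BddAbove (Set.range fun u ↦ (conj z₁ * β u + conj u * z₂ - conj u * β u).re)) :
    fitzpatrick β (z₁, z₂)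
      = ((⨆ u, (conj z₁ * β u + conj u * z₂ - conj u * β u).re : ℝ) : EReal) :=
  (Monotone.map_ciSup_of_continuousAt continuous_coe_real_ereal.continuousAt
    EReal.coe_strictMono.monotone hbdd).symm

theorem stmt12_general (β : ℂ → ℂ) (C c : ℝ) (hc : 0 < c)
    (h0 : β 0 = 0)
    (hLip : ∀ z z' : ℂ, ‖β z - β z'‖ ≤ C * ‖z - z'‖)
    (hmono : ∀ z z' : ℂ,
      (starRingEnd ℂ (β z - β z') * (z - z')).re ≥ c * ‖z - z'‖ ^ 2) :
    ∀ z₁ z₂ : ℂ, ∃ r : ℝ, fitzpatrick β (z₁, z₂) = (r : EReal)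
      ∧ r ≤ C ^ 2 * ‖z₁‖ ^ 2 / (2 * c) + ‖z₂‖ ^ 2 / (2 * c) := by
  intro z₁ z₂
  have hLip₀ (u : ℂ) : ‖β u‖ ≤ C * ‖u‖ := by simpa [h0] using hLip u 0
  have hmono₀ (u : ℂ) : c * ‖u‖ ^ 2 ≤ ⟪u, β u⟫ := by
    simpa [h0, re_conj_mul_eq_inner, real_inner_comm] using hmono u 0
  have hbound (u : ℂ) : (conj z₁ * β u + conj u * z₂ - conj u * β u).re
      ≤ C ^ 2 * ‖z₁‖ ^ 2 / (2 * c) + ‖z₂‖ ^ 2 / (2 * c) := by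
    simpa only [Complex.sub_re, Complex.add_re, re_conj_mul_eq_inner]
      using inner_add_inner_sub_inner_le hc hLip₀ hmono₀ z₁ z₂ u
  exact ⟨_, fitzpatrick_eq_coe_iSup ⟨_, Set.forall_mem_range.2 hbound⟩, ciSup_le hbound⟩

/-- Let `β : ℂ → ℂ` satisfy `β 0 = 0`, be `C`-Lipschitz (`C > 0`) and
strictly monotone with constant `c > 0`. Then the Fitzpatrick function `F_β` is
finite (real-valued) everywhere and satisfies
`F_β(z₁, z₂) ≤ C²·|z₁|²/(2c) + |z₂|²/(2c)` for all `z₁, z₂`. -/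
theorem stmt12 (β : ℂ → ℂ) (C c : ℝ) (hC : 0 < C) (hc : 0 < c)
    (h0 : β 0 = 0)
    (hLip : ∀ z z' : ℂ, ‖β z - β z'‖ ≤ C * ‖z - z'‖)
    (hmono : ∀ z z' : ℂ,
      (starRingEnd ℂ (β z - β z') * (z - z')).re ≥ c * ‖z - z'‖ ^ 2) :
    ∀ z₁ z₂ : ℂ, ∃ r : ℝ, fitzpatrick β (z₁, z₂) = (r : EReal)
      ∧ r ≤ C ^ 2 * ‖z₁‖ ^ 2 / (2 * c) + ‖z₂‖ ^ 2 / (2 * c) :=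
  stmt12_general β C c hc h0 hLip hmono
end
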